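/- arXiv:1909.03210 — 2 statements merged into one kernel-verified Lean document; each statement's English description precedes it below -/
import Mathlib

section
/- Let f : [N]^d → [N]^d be monotone, r ∈ [N], and let z* ∈ [N]^{d-1} be a fixed point of the induced monotone map g(z) := (f_1(z,r), ..., f_{d-1}(z,r)). If f_d(z*, r) > r, then (z*, r) ≤ f(z*, r), and hence f has a fixed point x* with x* ≥ f(z*, r). Symmetrically, if f_d(z*, r) < r, then f(z*, r) ≤ (z*, r), and f has a fixed point x* ≤ f(z*, r). -/
/-- Correctness of the recursive step of the divide-and-conquer
algorithm: if z* is a fixed point of the slice map g(z) = (f_1(z,r),...,f_{d-1}(z,r)),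
then comparing f_d(z*,r) with r yields either (z*,r) ≤ f(z*,r) (and a fixed point
above f(z*,r)) or f(z*,r) ≤ (z*,r) (and a fixed point below f(z*,r)). -/
theorem tarski_binary_search_step (N d : ℕ) [NeZero N]
    (f : (Fin (d + 1) → Fin N) → (Fin (d + 1) → Fin N)) (hf : Monotone f)
    (r : Fin N) (z : Fin d → Fin N)
    (hz : ∀ i : Fin d, f (Fin.snoc z r) (Fin.castSucc i) = z i) :
    (r < f (Fin.snoc z r) (Fin.last d) →
      Fin.snoc z r ≤ f (Fin.snoc z r) ∧
      ∃ x, f x = x ∧ f (Fin.snoc z r) ≤ x) ∧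
    (f (Fin.snoc z r) (Fin.last d) < r →
      f (Fin.snoc z r) ≤ Fin.snoc z r ∧
      ∃ x, f x = x ∧ x ≤ f (Fin.snoc z r)) := by
  have ha : (Fin.snoc z r : Fin (d+1) → Fin N) = Fin.snoc z r := rfl
  let F : (Fin (d + 1) → Fin N) →o (Fin (d + 1) → Fin N) := ⟨f, hf⟩
  constructor
  · intro h
    have hle : (Fin.snoc z r) ≤ f (Fin.snoc z r) := by
      intro i
      refine Fin.lastCases ?_ ?_ i
      · simpa [ha, Fin.snoc_last] using h.le
      · intro j; simp [ha, hz j, Fin.snoc_castSucc]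
    refine ⟨hle, OrderHom.gfp F, F.map_gfp, ?_⟩
    have : (Fin.snoc z r) ≤ OrderHom.gfp F := F.le_gfp hle
    calc f (Fin.snoc z r) ≤ f (OrderHom.gfp F) := hf this
      _ = OrderHom.gfp F := F.map_gfp
  · intro h
    have hle : f (Fin.snoc z r) ≤ (Fin.snoc z r) := by
      intro i
      refine Fin.lastCases ?_ ?_ i
      · simpa [ha, Fin.snoc_last] using h.le
      · intro j; simp [ha, hz j, Fin.snoc_castSucc]
    refine ⟨hle, OrderHom.lfp F, F.map_lfp, ?_⟩
    have : OrderHom.lfp F ≤ (Fin.snoc z r) := F.lfp_le hle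
    calc OrderHom.lfp F = f (OrderHom.lfp F) := F.map_lfp.symm
      _ ≤ f (Fin.snoc z r) := hf this
end

section
/- Let f : [1,N]^d → [1,N]^d (the continuous box with the L∞ norm) be monotone with respect to coordinatewise order, let ε > 0, and let k = ⌈1/ε⌉. Define g on the integer grid D = {x ∈ ℤ^d : k ≤ x_i ≤ Nk} by letting g(x) be the coordinatewise rounding of k·f(x/k) to the nearest integer (ties broken towards the ceiling). Then g is monotone, and if x* is a fixed point of g, then x*/k is an ε-approximate fixed point of f, i.e., ‖f(x*/k) − x*/k‖_∞ ≤ ε. -/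
/-- Discretizing a monotone map f on the continuous box [1,N]^d with
grid step 1/k, k = ⌈1/ε⌉, by rounding k·f(x/k) to nearest integers (ties to ceiling,
as in Mathlib's `round`), gives a monotone map g on the integer grid {k,...,Nk}^d,
and any fixed point x* of g yields the ε-approximate fixed point x*/k of f. -/
theorem discretization_approx_fixed_point (N d : ℕ)
    (f : (Fin d → ℝ) → (Fin d → ℝ))
    (hmap : ∀ x : Fin d → ℝ, (∀ i, 1 ≤ x i ∧ x i ≤ N) →
      ∀ i, 1 ≤ f x i ∧ f x i ≤ N)
    (hmono : ∀ x y : Fin d → ℝ, (∀ i, 1 ≤ x i ∧ x i ≤ N) →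
      (∀ i, 1 ≤ y i ∧ y i ≤ N) → x ≤ y → f x ≤ f y)
    (ε : ℝ) (hε : 0 < ε) (k : ℤ) (hk : k = ⌈1 / ε⌉)
    (g : (Fin d → ℤ) → (Fin d → ℤ))
    (hg : ∀ x : Fin d → ℤ, g x = fun i =>
      round ((k : ℝ) * f (fun j => (x j : ℝ) / (k : ℝ)) i)) :
    (∀ x y : Fin d → ℤ, (∀ i, k ≤ x i ∧ x i ≤ N * k) →
      (∀ i, k ≤ y i ∧ y i ≤ N * k) → x ≤ y → g x ≤ g y) ∧
    (∀ x : Fin d → ℤ, (∀ i, k ≤ x i ∧ x i ≤ N * k) → g x = x →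
      ∀ i, |f (fun j => (x j : ℝ) / (k : ℝ)) i - (x i : ℝ) / (k : ℝ)| ≤ ε) := by
  have hkpos : (0:ℤ) < k := by
    rw [hk]; exact Int.ceil_pos.mpr (by positivity)
  have hkR : (0:ℝ) < (k:ℝ) := by exact_mod_cast hkpos
  have hdom : ∀ x : Fin d → ℤ, (∀ i, k ≤ x i ∧ x i ≤ N * k) →
      ∀ i, 1 ≤ (x i : ℝ) / k ∧ (x i : ℝ) / k ≤ N := by
    intro x hx i
    constructor
    · rw [le_div_iff₀ hkR, one_mul]; exact_mod_cast (hx i).1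
    · rw [div_le_iff₀ hkR]; exact_mod_cast (hx i).2
  constructor
  · intro x y hx hy hxy
    rw [hg x, hg y]
    intro i
    have h1 : f (fun j => (x j : ℝ) / k) ≤ f (fun j => (y j : ℝ) / k) := by
      apply hmono _ _ (hdom x hx) (hdom y hy)
      intro j
      have hxyj : ((x j : ℝ)) ≤ (y j : ℝ) := by exact_mod_cast hxy j
      show (x j : ℝ) / k ≤ (y j : ℝ) / k
      gcongr
    show round ((k:ℝ) * f (fun j => (x j : ℝ) / k) i) ≤
      round ((k:ℝ) * f (fun j => (y j : ℝ) / k) i)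
    rw [round_eq, round_eq]
    exact Int.floor_mono (by nlinarith [h1 i])
  · intro x hx hfix i
    have hround : round ((k : ℝ) * f (fun j => (x j : ℝ) / k) i) = x i := by
      have := congrFun ((hg x).symm.trans hfix) i
      simpa using this
    have h1 : |(k : ℝ) * f (fun j => (x j : ℝ) / k) i - (x i : ℝ)| ≤ 1 / 2 := by
      have h2 := abs_sub_round ((k : ℝ) * f (fun j => (x j : ℝ) / k) i)
      rw [hround] at h2
      exact_mod_cast h2
    have hke : 1 / ε ≤ (k : ℝ) := by
      rw [hk]; exact_mod_cast Int.le_ceil (1 / ε)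
    have hkeps : 1 / (k : ℝ) ≤ ε := by
      rw [div_le_iff₀ hkR]
      rw [div_le_iff₀ hε] at hke
      linarith [mul_comm ε (k:ℝ)]
    have key : |f (fun j => (x j : ℝ) / k) i - (x i : ℝ) / k| =
        |((k : ℝ) * f (fun j => (x j : ℝ) / k) i - (x i : ℝ)) / k| := by
      congr 1
      field_simp
    rw [key, abs_div, abs_of_pos hkR]
    calc |(k : ℝ) * f (fun j => (x j : ℝ) / k) i - (x i : ℝ)| / k
        ≤ (1/2) / k := by gcongr
      _ ≤ 1 / k := by gcongr <;> norm_num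
      _ ≤ ε := hkeps
end
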